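/- For every x∈ℝ³ and every t≥0 one has 0 ≤ ξ̃(x,t) ≤ 2 and 0 ≤ (1/2)·ξ̃(x,t)·t² − ξ₁(x,t) ≤ (3/2)·t·φ(x). -/
import Mathlib


noncomputable section

/-- `φ(x) = 1/(1+|x|⁴)`. -/
def phi (x : EuclideanSpace ℝ (Fin 3)) : ℝ := 1 / (1 + ‖x‖ ^ 4)

/-- The penalization function `ξ`. -/
def xi (x : EuclideanSpace ℝ (Fin 3)) (t : ℝ) : ℝ :=
  if t ≤ phi x then 0
  else if t < 2 * phi x then (t - phi x) ^ 2 / phi x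
  else 2 * t - 3 * phi x

/-- The primitive `ξ₁(x,t) = ∫_{−∞}^t ξ(x,s) ds`. -/
def xi1 (x : EuclideanSpace ℝ (Fin 3)) (t : ℝ) : ℝ :=
  if t ≤ phi x then 0
  else if t < 2 * phi x then (t - phi x) ^ 3 / (3 * phi x)
  else t ^ 2 - 3 * phi x * t + (7 / 3) * phi x ^ 2

/-- `ξ̃(x,t) = ξ(x,t)/t` for `t>0`, and `ξ̃(x,0)=0`. -/
def xitilde (x : EuclideanSpace ℝ (Fin 3)) (t : ℝ) : ℝ :=
  if 0 < t then xi x t / t else 0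

theorem stmt10 (x : EuclideanSpace ℝ (Fin 3)) (t : ℝ) (ht : 0 ≤ t) :
    (0 ≤ xitilde x t ∧ xitilde x t ≤ 2) ∧
    (0 ≤ (1 / 2) * xitilde x t * t ^ 2 - xi1 x t ∧
      (1 / 2) * xitilde x t * t ^ 2 - xi1 x t ≤ (3 / 2) * t * phi x) := by
  have hp : 0 < phi x := by
    unfold phi; positivity
  set p := phi x with hpdef
  rcases le_or_gt t p with h1 | h1
  · have hxi : xi x t = 0 := by unfold xi; rw [if_pos h1]
    have hxi1 : xi1 x t = 0 := by unfold xi1; rw [if_pos h1]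
    have hxt : xitilde x t = 0 := by
      unfold xitilde; rw [hxi]; simp
    rw [hxt, hxi1]
    refine ⟨⟨le_refl 0, by norm_num⟩, ⟨by norm_num, ?_⟩⟩
    nlinarith
  · have ht' : 0 < t := hp.trans h1
    rcases lt_or_ge t (2 * p) with h2 | h2
    · have hxi : xi x t = (t - p) ^ 2 / p := by
        unfold xi; rw [if_neg (not_le.mpr h1), if_pos h2]
      have hxi1 : xi1 x t = (t - p) ^ 3 / (3 * p) := by
        unfold xi1; rw [if_neg (not_le.mpr h1), if_pos h2]
      have hxt : xitilde x t = (t - p) ^ 2 / p / t := by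
        unfold xitilde; rw [if_pos ht', hxi]
      rw [hxt, hxi1]
      have key : (1 / 2) * ((t - p) ^ 2 / p / t) * t ^ 2 - (t - p) ^ 3 / (3 * p)
          = (t - p) ^ 2 * (t + 2 * p) / (6 * p) := by
        field_simp
        ring
      rw [key]
      refine ⟨⟨by positivity, ?_⟩, ⟨by positivity, ?_⟩⟩
      · rw [div_div, div_le_iff₀ (by positivity)]
        nlinarith [mul_nonneg (sub_nonneg.mpr h1.le) (sub_nonneg.mpr h2.le)]
      · rw [div_le_iff₀ (by positivity)]
        nlinarith [sq_nonneg (t - p), sq_nonneg (t - 2 * p), mul_pos hp ht']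
    · have hxi : xi x t = 2 * t - 3 * p := by
        unfold xi; rw [if_neg (not_le.mpr h1), if_neg (not_lt.mpr h2)]
      have hxi1 : xi1 x t = t ^ 2 - 3 * p * t + (7 / 3) * p ^ 2 := by
        unfold xi1; rw [if_neg (not_le.mpr h1), if_neg (not_lt.mpr h2)]
      have hxt : xitilde x t = (2 * t - 3 * p) / t := by
        unfold xitilde; rw [if_pos ht', hxi]
      rw [hxt, hxi1]
      have key : (1 / 2) * ((2 * t - 3 * p) / t) * t ^ 2 - (t ^ 2 - 3 * p * t + (7 / 3) * p ^ 2)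
          = (3 / 2) * p * t - (7 / 3) * p ^ 2 := by
        field_simp
        ring
      rw [key]
      refine ⟨⟨div_nonneg (by linarith) ht'.le, ?_⟩, ⟨by nlinarith, by nlinarith⟩⟩
      rw [div_le_iff₀ ht']
      nlinarith
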